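/- Let T be a theory of S4F standpoint logic, ξ a formula, and z ∈ A an atom not occurring in T ∪ {ξ}. Define T_cred := T ∪ {(□_*¬□_* z ∧ □_*¬□_* ξ) → □_* z}. Then T credulously entails ξ (some minimal model of T satisfies ξ) if and only if T_cred has a minimal model. -/
import Mathlib


/-- Formulas of S4F standpoint logic over atoms `A` and standpoint names `S`. -/
inductive SForm (A S : Type) : Type
  | atom : A → SForm A S
  | neg  : SForm A S → SForm A S
  | and  : SForm A S → SForm A S → SForm A S
  | box  : S → SForm A S → SForm A S

/-- Expressions: formulas or sharpening statements `s ≼ u`. -/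
inductive SExpr (A S : Type) : Type
  | form  : SForm A S → SExpr A S
  | sharp : S → S → SExpr A S

/-- S4F standpoint structures over a carrier type `P` of precisifications. -/
structure SFFS (A S P : Type) (star : S) where
  Pi : Set P
  sig : S → Set P
  tau : S → Set P
  val : P → Set A
  nonempty_Pi : Pi.Nonempty
  sig_sub : ∀ s, sig s ⊆ Pi
  tau_sub : ∀ s, tau s ⊆ Pi
  star_union : sig star ∪ tau star = Pi
  sig_nonempty : ∀ s, (sig s).Nonempty
  sig_tau_disj : ∀ s u, sig s ∩ tau u = ∅

/-- Pointed satisfaction `F, π ⊩ φ` for formulas. -/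
def SFFS.sat {A S P : Type} {star : S} (F : SFFS A S P star) : SForm A S → P → Prop
  | SForm.atom p, π => p ∈ F.val π
  | SForm.neg φ, π => ¬ F.sat φ π
  | SForm.and φ ψ, π => F.sat φ π ∧ F.sat ψ π
  | SForm.box s φ, π =>
      (π ∈ F.sig star → ∀ π' ∈ F.sig s, F.sat φ π') ∧
      (π ∈ F.tau star → ∀ π' ∈ F.sig s ∪ F.tau s, F.sat φ π')

/-- Pointed satisfaction for expressions. -/
def SFFS.satE {A S P : Type} {star : S} (F : SFFS A S P star) (e : SExpr A S) (π : P) : Prop :=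
  match e with
  | SExpr.form φ => F.sat φ π
  | SExpr.sharp s u => F.sig s ⊆ F.sig u ∧ F.tau s ⊆ F.tau u

/-- Global satisfaction `F ⊩ φ` of a formula. -/
def SFFS.models {A S P : Type} {star : S} (F : SFFS A S P star) (φ : SForm A S) : Prop :=
  ∀ π ∈ F.Pi, F.sat φ π

/-- Global satisfaction of an expression. -/
def SFFS.modelsE {A S P : Type} {star : S} (F : SFFS A S P star) (e : SExpr A S) : Prop :=
  ∀ π ∈ F.Pi, F.satE e π

/-- `F` is a model of a theory (set of expressions) `T`. -/
def SFFS.isModel {A S P : Type} {star : S} (F : SFFS A S P star) (T : Set (SExpr A S)) : Prop :=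
  ∀ e ∈ T, F.modelsE e

/-- `F` is a model of a set of formulas `T`. -/
def SFFS.isModelF {A S P : Type} {star : S} (F : SFFS A S P star) (T : Set (SForm A S)) : Prop :=
  ∀ φ ∈ T, F.models φ

/-- S5 standpoint structures: all outer sets empty. -/
def SFFS.IsS5 {A S P : Type} {star : S} (F : SFFS A S P star) : Prop :=
  ∀ s, F.tau s = ∅

/-- Determination preorder `F1 ⊴_s F2`, per standpoint. -/
def prefS {A S P1 P2 : Type} {star : S} (F1 : SFFS A S P1 star) (F2 : SFFS A S P2 star)
    (s : S) : Prop :=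
  F2.val '' F2.sig s = F1.val '' F1.sig s ∧
  F2.val '' F2.tau s ⊆ F1.val '' (F1.sig s ∪ F1.tau s)

/-- Determination preorder `F1 ⊴ F2`. -/
def pref {A S P1 P2 : Type} {star : S} (F1 : SFFS A S P1 star) (F2 : SFFS A S P2 star) : Prop :=
  ∀ s, prefS F1 F2 s

/-- Entailment `T ⊨ e`: every model of `T` satisfies `e`. -/
def Entails {A S : Type} (star : S) (T : Set (SExpr A S)) (e : SExpr A S) : Prop :=
  ∀ (P : Type) (F : SFFS A S P star), F.isModel T → F.modelsE e

/-- Derivable sharpening `T ⊢ s ≼ u`. -/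
inductive Sharpens {A S : Type} (star : S) (T : Set (SExpr A S)) : S → S → Prop
  | of_mem {s u : S} : SExpr.sharp s u ∈ T → Sharpens star T s u
  | to_star (s : S) : Sharpens star T s star
  | refl (s : S) : Sharpens star T s s
  | trans {s t u : S} : SExpr.sharp s t ∈ T → Sharpens star T t u → Sharpens star T s u

/-- An S5 standpoint structure `F` is a minimal model of a theory `T`. -/
def isMinimalModel {A S P : Type} {star : S} (F : SFFS A S P star) (T : Set (SExpr A S)) : Prop :=
  F.IsS5 ∧ F.isModel T ∧
  ∀ (P' : Type) (F' : SFFS A S P' star), pref F' F → F'.isModel T → (pref F' F ∧ pref F F')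

/-- Implication `φ → χ`, abbreviating `¬(φ ∧ ¬χ)`. -/
def SForm.impl {A S : Type} (φ χ : SForm A S) : SForm A S :=
  SForm.neg (SForm.and φ (SForm.neg χ))

/-- The atom `z` occurs in a formula. -/
def occursF {A S : Type} (z : A) : SForm A S → Prop
  | SForm.atom p => p = z
  | SForm.neg φ => occursF z φ
  | SForm.and φ ψ => occursF z φ ∨ occursF z ψ
  | SForm.box _ φ => occursF z φ

/-- The atom `z` occurs in an expression. -/
def occursE {A S : Type} (z : A) : SExpr A S → Prop
  | SExpr.form φ => occursF z φ
  | SExpr.sharp _ _ => False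

/-- The additional formula of `T_cred`: `(□_*¬□_* z ∧ □_*¬□_* ξ) → □_* z`. -/
def credAx {A S : Type} (star : S) (z : A) (ξ : SForm A S) : SForm A S :=
  SForm.impl
    (SForm.and (SForm.box star (SForm.neg (SForm.box star (SForm.atom z))))
               (SForm.box star (SForm.neg (SForm.box star ξ))))
    (SForm.box star (SForm.atom z))

section CredAux

variable {A S : Type} {star : S}

lemma sig_disj_tau {P} (F : SFFS A S P star) {s u : S} {π : P}
    (h : π ∈ F.sig s) (h' : π ∈ F.tau u) : False := by
  have := F.sig_tau_disj s u
  have : π ∈ (∅ : Set P) := this ▸ Set.mem_inter h h'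
  exact this

lemma sig_sub_star {P} (F : SFFS A S P star) (s : S) : F.sig s ⊆ F.sig star := by
  intro π h
  have hPi := F.sig_sub s h
  rw [← F.star_union] at hPi
  rcases hPi with h1 | h1
  · exact h1
  · exact (sig_disj_tau F h h1).elim

lemma sat_box_of_sig {P} (F : SFFS A S P star) {π : P} (hπ : π ∈ F.sig star) (s : S)
    (ψ : SForm A S) :
    F.sat (SForm.box s ψ) π ↔ ∀ π' ∈ F.sig s, F.sat ψ π' := by
  constructor
  · intro h; exact h.1 hπ
  · intro h
    exact ⟨fun _ => h, fun hτ => (sig_disj_tau F hπ hτ).elim⟩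

lemma sat_box_of_tau {P} (F : SFFS A S P star) {π : P} (hπ : π ∈ F.tau star) (s : S)
    (ψ : SForm A S) :
    F.sat (SForm.box s ψ) π ↔ ∀ π' ∈ F.sig s ∪ F.tau s, F.sat ψ π' := by
  constructor
  · intro h; exact h.2 hπ
  · intro h
    exact ⟨fun hσ => (sig_disj_tau F hσ hπ).elim, fun _ => h⟩

/-- Truth at σ(*)-points depends only on the point valuation and the σ-images. -/
lemma sat_transfer {P1 P2} (F1 : SFFS A S P1 star) (F2 : SFFS A S P2 star)
    (h : ∀ s, F1.val '' F1.sig s = F2.val '' F2.sig s) :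
    ∀ (φ : SForm A S) (π1 : P1) (π2 : P2), π1 ∈ F1.sig star → π2 ∈ F2.sig star →
      F1.val π1 = F2.val π2 → (F1.sat φ π1 ↔ F2.sat φ π2) := by
  intro φ
  induction φ with
  | atom p =>
    intro π1 π2 h1 h2 hv
    show p ∈ F1.val π1 ↔ p ∈ F2.val π2
    rw [hv]
  | neg φ ih =>
    intro π1 π2 h1 h2 hv
    show ¬ _ ↔ ¬ _
    rw [ih π1 π2 h1 h2 hv]
  | and φ ψ ih1 ih2 =>
    intro π1 π2 h1 h2 hv
    show _ ∧ _ ↔ _ ∧ _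
    rw [ih1 π1 π2 h1 h2 hv, ih2 π1 π2 h1 h2 hv]
  | box s φ ih =>
    intro π1 π2 h1 h2 hv
    rw [sat_box_of_sig F1 h1, sat_box_of_sig F2 h2]
    constructor
    · intro H π' hπ'
      have hmem : F2.val π' ∈ F1.val '' F1.sig s := by rw [h s]; exact ⟨π', hπ', rfl⟩
      obtain ⟨π'', hπ'', hval⟩ := hmem
      exact (ih π'' π' (sig_sub_star F1 s hπ'') (sig_sub_star F2 s hπ') hval).mp (H π'' hπ'')
    · intro H π' hπ'
      have hmem : F1.val π' ∈ F2.val '' F2.sig s := by rw [← h s]; exact ⟨π', hπ', rfl⟩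
      obtain ⟨π'', hπ'', hval⟩ := hmem
      exact (ih π' π'' (sig_sub_star F1 s hπ') (sig_sub_star F2 s hπ'') hval.symm).mpr
        (H π'' hπ'')

/-- credAx holds whenever ξ holds at all σ(*)-points. -/
lemma models_credAx_of_xi {P} (F : SFFS A S P star) (z : A) (ξ : SForm A S)
    (hξ : ∀ π ∈ F.sig star, F.sat ξ π) :
    F.models (credAx star z ξ) := by
  intro π hπ
  obtain ⟨π1, hπ1⟩ := F.sig_nonempty star
  have hbox : F.sat (SForm.box star ξ) π1 := by
    rw [sat_box_of_sig F hπ1]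
    exact hξ
  intro hand
  have hA := hand.1.2
  have hmem := hπ
  rw [← F.star_union] at hmem
  rcases hmem with hσ | hτ
  · rw [sat_box_of_sig F hσ] at hA
    exact hA π1 hπ1 hbox
  · rw [sat_box_of_tau F hτ] at hA
    exact hA π1 (Or.inl hπ1) hbox

/-- credAx holds whenever z holds at all σ(*)-points. -/
lemma models_credAx_of_z {P} (F : SFFS A S P star) (z : A) (ξ : SForm A S)
    (hz : ∀ π ∈ F.sig star, z ∈ F.val π) :
    F.models (credAx star z ξ) := by
  intro π hπ
  obtain ⟨π1, hπ1⟩ := F.sig_nonempty star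
  have hbox : F.sat (SForm.box star (SForm.atom z)) π1 := by
    rw [sat_box_of_sig F hπ1]
    exact hz
  intro hand
  have hA := hand.1.1
  have hmem := hπ
  rw [← F.star_union] at hmem
  rcases hmem with hσ | hτ
  · rw [sat_box_of_sig F hσ] at hA
    exact hA π1 hπ1 hbox
  · rw [sat_box_of_tau F hτ] at hA
    exact hA π1 (Or.inl hπ1) hbox

/-- In an S5 structure, credAx forces z-everywhere or ξ-everywhere. -/
lemma credAx_S5 {P} (G : SFFS A S P star) (hS5 : G.IsS5) (z : A) (ξ : SForm A S)
    (hc : G.models (credAx star z ξ)) :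
    (∀ π ∈ G.sig star, z ∈ G.val π) ∨ (∀ π ∈ G.Pi, G.sat ξ π) := by
  have hPi : G.Pi = G.sig star := by
    rw [← G.star_union, hS5 star, Set.union_empty]
  by_cases hz : ∀ π ∈ G.sig star, z ∈ G.val π
  · exact Or.inl hz
  · right
    push_neg at hz
    obtain ⟨π0, hπ0, hz0⟩ := hz
    obtain ⟨π1, hπ1⟩ := G.sig_nonempty star
    have h := hc π1 (by rw [hPi]; exact hπ1)
    have hCon : ¬ G.sat (SForm.box star (SForm.atom z)) π1 := by
      rw [sat_box_of_sig G hπ1]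
      intro hall
      exact hz0 (hall π0 hπ0)
    have hB1 : G.sat (SForm.box star (SForm.neg (SForm.box star (SForm.atom z)))) π1 := by
      rw [sat_box_of_sig G hπ1]
      intro π' hπ'
      show ¬ _
      rw [sat_box_of_sig G (sig_sub_star G star hπ')]
      intro hall
      exact hz0 (hall π0 hπ0)
    have hnA : ¬ (G.sat (SForm.box star (SForm.neg (SForm.box star (SForm.atom z)))) π1 ∧
        G.sat (SForm.box star (SForm.neg (SForm.box star ξ))) π1) := by
      intro hA
      exact h ⟨hA, hCon⟩
    have hnB2 : ¬ G.sat (SForm.box star (SForm.neg (SForm.box star ξ))) π1 :=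
      fun hB2 => hnA ⟨hB1, hB2⟩
    rw [sat_box_of_sig G hπ1] at hnB2
    push_neg at hnB2
    obtain ⟨π2, hπ2, hsat⟩ := hnB2
    have hsat' : G.sat (SForm.box star ξ) π2 := not_not.mp hsat
    rw [sat_box_of_sig G (sig_sub_star G star hπ2)] at hsat'
    intro π hπ
    exact hsat' π (by rw [hPi] at hπ; exact hπ)

end CredAux

section CredDouble

variable {A S : Type} {star : S}

/-- Doubling on `z`: each σ(*)-point gets a matched (σ) copy and a z-toggled (τ) copy. -/
def doubleZ {P} (G : SFFS A S P star) (z : A) : SFFS A S (P × Bool) star where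
  Pi := {q | q.1 ∈ G.sig star}
  sig s := {q | q.1 ∈ G.sig s ∧ (q.2 = true ↔ z ∈ G.val q.1)}
  tau s := {q | q.1 ∈ G.sig s ∧ ¬ (q.2 = true ↔ z ∈ G.val q.1)}
  val q := (G.val q.1 \ {z}) ∪ {a | a = z ∧ q.2 = true}
  nonempty_Pi := by
    obtain ⟨π, hπ⟩ := G.sig_nonempty star
    exact ⟨(π, true), hπ⟩
  sig_sub s := fun q hq => sig_sub_star G s hq.1
  tau_sub s := fun q hq => sig_sub_star G s hq.1
  star_union := by
    ext q
    simp only [Set.mem_union, Set.mem_setOf_eq]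
    tauto
  sig_nonempty s := by
    obtain ⟨π, hπ⟩ := G.sig_nonempty s
    by_cases hz : z ∈ G.val π
    · exact ⟨(π, true), hπ, by simp [hz]⟩
    · exact ⟨(π, false), hπ, by simp [hz]⟩
  sig_tau_disj s u := by
    ext q
    simp only [Set.mem_inter_iff, Set.mem_setOf_eq, Set.mem_empty_iff_false, iff_false]
    rintro ⟨⟨-, h1⟩, ⟨-, h2⟩⟩
    exact h2 h1

lemma doubleZ_val_matched {P} (G : SFFS A S P star) (z : A) {q : P × Bool}
    (hq : q.2 = true ↔ z ∈ G.val q.1) : (doubleZ G z).val q = G.val q.1 := by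
  ext a
  simp only [doubleZ, Set.mem_union, Set.mem_diff, Set.mem_singleton_iff, Set.mem_setOf_eq]
  constructor
  · rintro (⟨h, -⟩ | ⟨rfl, hb⟩)
    · exact h
    · exact hq.mp hb
  · intro h
    by_cases ha : a = z
    · exact Or.inr ⟨ha, hq.mpr (ha ▸ h)⟩
    · exact Or.inl ⟨h, ha⟩

lemma doubleZ_val_ne {P} (G : SFFS A S P star) (z : A) (q : P × Bool) {a : A}
    (ha : a ≠ z) : a ∈ (doubleZ G z).val q ↔ a ∈ G.val q.1 := by
  simp only [doubleZ, Set.mem_union, Set.mem_diff, Set.mem_singleton_iff, Set.mem_setOf_eq]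
  constructor
  · rintro (⟨h, -⟩ | ⟨rfl, -⟩)
    · exact h
    · exact (ha rfl).elim
  · exact fun h => Or.inl ⟨h, ha⟩

lemma doubleZ_sat {P} (G : SFFS A S P star) (z : A) :
    ∀ (φ : SForm A S), ¬ occursF z φ → ∀ (π : P) (b : Bool), π ∈ G.sig star →
      ((doubleZ G z).sat φ (π, b) ↔ G.sat φ π) := by
  intro φ
  induction φ with
  | atom p =>
    intro hz π b hπ
    have hp : p ≠ z := hz
    exact doubleZ_val_ne G z (π, b) hp
  | neg φ ih =>
    intro hz π b hπ
    have : ¬ occursF z φ := hz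
    show ¬ _ ↔ ¬ _
    rw [ih this π b hπ]
  | and φ ψ ih1 ih2 =>
    intro hz π b hπ
    have h1 : ¬ occursF z φ := fun h => hz (Or.inl h)
    have h2 : ¬ occursF z ψ := fun h => hz (Or.inr h)
    show _ ∧ _ ↔ _ ∧ _
    rw [ih1 h1 π b hπ, ih2 h2 π b hπ]
  | box s φ ih =>
    intro hz π b hπ
    have hzφ : ¬ occursF z φ := hz
    rw [sat_box_of_sig G hπ s φ]
    have key : (∀ q ∈ (doubleZ G z).sig s ∪ (doubleZ G z).tau s, (doubleZ G z).sat φ q) ↔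
        (∀ π' ∈ G.sig s, G.sat φ π') := by
      constructor
      · intro H π' hπ'
        by_cases hb : z ∈ G.val π'
        · have := H (π', true) (Or.inl ⟨hπ', by simp [hb]⟩)
          exact (ih hzφ π' true (sig_sub_star G s hπ')).mp this
        · have := H (π', false) (Or.inl ⟨hπ', by simp [hb]⟩)
          exact (ih hzφ π' false (sig_sub_star G s hπ')).mp this
      · rintro H ⟨π', b'⟩ hq
        have hπ' : π' ∈ G.sig s := by
          rcases hq with h | h
          · exact h.1
          · exact h.1
        exact (ih hzφ π' b' (sig_sub_star G s hπ')).mpr (H π' hπ')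
    by_cases hb : (b = true ↔ z ∈ G.val π)
    · have hqσ : (π, b) ∈ (doubleZ G z).sig star := ⟨hπ, hb⟩
      rw [sat_box_of_sig (doubleZ G z) hqσ s φ]
      constructor
      · intro H π' hπ'
        by_cases hb' : z ∈ G.val π'
        · exact (ih hzφ π' true (sig_sub_star G s hπ')).mp (H (π', true) ⟨hπ', by simp [hb']⟩)
        · exact (ih hzφ π' false (sig_sub_star G s hπ')).mp (H (π', false) ⟨hπ', by simp [hb']⟩)
      · rintro H ⟨π', b'⟩ hq
        exact (ih hzφ π' b' (sig_sub_star G s hq.1)).mpr (H π' hq.1)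
    · have hqτ : (π, b) ∈ (doubleZ G z).tau star := ⟨hπ, hb⟩
      rw [sat_box_of_tau (doubleZ G z) hqτ s φ]
      exact key

lemma doubleZ_isModel {P} (G : SFFS A S P star) (z : A) (T : Set (SExpr A S))
    (hT : G.isModel T) (hz : ∀ e ∈ T, ¬ occursE z e) :
    (doubleZ G z).isModel T := by
  intro e he q hq
  cases e with
  | form φ =>
    have hq1 : q.1 ∈ G.sig star := hq
    have := hT _ he q.1 (G.sig_sub star hq1)
    exact (doubleZ_sat G z φ (hz _ he) q.1 q.2 hq1).mpr this
  | sharp s u =>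
    obtain ⟨π0, hπ0⟩ := G.nonempty_Pi
    obtain ⟨hsu, htu⟩ := hT _ he π0 hπ0
    constructor
    · rintro ⟨π', b'⟩ ⟨h1, h2⟩
      exact ⟨hsu h1, h2⟩
    · rintro ⟨π', b'⟩ ⟨h1, h2⟩
      exact ⟨hsu h1, h2⟩

lemma pref_doubleZ {P} (G : SFFS A S P star) (hS5 : G.IsS5) (z : A) :
    pref (doubleZ G z) G := by
  intro s
  constructor
  · ext v
    constructor
    · rintro ⟨π, hπ, rfl⟩
      by_cases hb : z ∈ G.val π
      · refine ⟨(π, true), ⟨hπ, by simp [hb]⟩, ?_⟩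
        exact doubleZ_val_matched G z (by simp [hb])
      · refine ⟨(π, false), ⟨hπ, by simp [hb]⟩, ?_⟩
        exact doubleZ_val_matched G z (by simp [hb])
    · rintro ⟨q, hq, rfl⟩
      exact ⟨q.1, hq.1, (doubleZ_val_matched G z hq.2).symm⟩
  · rw [hS5 s]
    simp

end CredDouble

/-- `T` credulously entails `ξ` (some minimal model of `T` satisfies `ξ`)
iff `T_cred := T ∪ {(□_*¬□_* z ∧ □_*¬□_* ξ) → □_* z}` has a minimal model, provided the
atom `z` does not occur in `T ∪ {ξ}`. -/
theorem credulous_iff_Tcred_has_minimal_model {A S : Type} (star : S)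
    (T : Set (SExpr A S)) (ξ : SForm A S) (z : A)
    (hzT : ∀ e ∈ T, ¬ occursE z e) (hzξ : ¬ occursF z ξ) :
    (∃ (P : Type) (F : SFFS A S P star), isMinimalModel F T ∧ F.models ξ) ↔
    (∃ (P : Type) (F : SFFS A S P star),
       isMinimalModel F (T ∪ {SExpr.form (credAx star z ξ)})) := by
  constructor
  · rintro ⟨P, F, ⟨hS5, hModT, hMinT⟩, hFξ⟩
    refine ⟨P, F, hS5, ?_, ?_⟩
    · intro e he
      rcases he with he | he
      · exact hModT e he
      · rw [Set.mem_singleton_iff] at he; subst he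
        intro π hπ
        exact models_credAx_of_xi F z ξ (fun π' hπ' => hFξ π' (F.sig_sub star hπ')) π hπ
    · intro P' F' hp hm
      exact hMinT P' F' hp (fun e he => hm e (Set.mem_union_left _ he))
  · rintro ⟨P, G, hS5, hMod, hMin⟩
    have hModT : G.isModel T := fun e he => hMod e (Set.mem_union_left _ he)
    have hcred : G.models (credAx star z ξ) := hMod _ (Set.mem_union_right _ rfl)
    have hξ : ∀ π ∈ G.Pi, G.sat ξ π := by
      rcases credAx_S5 G hS5 z ξ hcred with hzall | hξ
      · exfalso
        have hd1 : (doubleZ G z).isModel (T ∪ {SExpr.form (credAx star z ξ)}) := by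
          intro e he
          rcases he with he | he
          · exact doubleZ_isModel G z T hModT hzT e he
          · rw [Set.mem_singleton_iff] at he; subst he
            intro q hq
            refine models_credAx_of_z (doubleZ G z) z ξ ?_ q hq
            rintro ⟨π, b⟩ ⟨h1, h2⟩
            rw [doubleZ_val_matched G z h2]
            exact hzall π h1
        obtain ⟨-, hback⟩ := hMin _ (doubleZ G z) (pref_doubleZ G hS5 z) hd1
        obtain ⟨π0, hπ0⟩ := G.sig_nonempty star
        have hz0 : z ∈ G.val π0 := hzall π0 hπ0
        have hq0τ : (π0, false) ∈ (doubleZ G z).tau star := ⟨hπ0, by simp [hz0]⟩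
        have hmem : (doubleZ G z).val (π0, false) ∈ G.val '' (G.sig star ∪ G.tau star) :=
          (hback star).2 ⟨(π0, false), hq0τ, rfl⟩
        obtain ⟨π1, hπ1, hval⟩ := hmem
        have hz1 : z ∈ G.val π1 := by
          rcases hπ1 with h | h
          · exact hzall π1 h
          · rw [hS5 star] at h; exact h.elim
        rw [hval] at hz1
        simp [doubleZ] at hz1
      · exact hξ
    refine ⟨P, G, ⟨hS5, hModT, ?_⟩, hξ⟩
    intro P' F' hp hm
    have himg : ∀ s, F'.val '' F'.sig s = G.val '' G.sig s := fun s => ((hp s).1).symm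
    have hξ' : ∀ π ∈ F'.sig star, F'.sat ξ π := by
      intro π hπ
      have hmem : F'.val π ∈ G.val '' G.sig star := by
        rw [← himg star]; exact ⟨π, hπ, rfl⟩
      obtain ⟨π2, hπ2, hval⟩ := hmem
      exact (sat_transfer F' G himg ξ π π2 hπ hπ2 hval.symm).mpr
        (hξ π2 (G.sig_sub star hπ2))
    have hm' : F'.isModel (T ∪ {SExpr.form (credAx star z ξ)}) := by
      intro e he
      rcases he with he | he
      · exact hm e he
      · rw [Set.mem_singleton_iff] at he; subst he
        intro π hπ
        exact models_credAx_of_xi F' z ξ hξ' π hπ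
    exact hMin P' F' hp hm'
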